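/- For tempered weights wᵢ(α) ∝ exp(−(α/2)cᵢ) with cᵢ ≥ 0, the sum of squared weights ∑ᵢ wᵢ(α)² is nondecreasing in α ≥ 0; equivalently the effective sample size M_eff(α) = 1/∑ᵢ wᵢ(α)² is nonincreasing in α. -/

import Mathlib

/-!
Increasing `α` from `a` to `b ≥ a` multiplies each unnormalised weight
`u i = exp (-(a / 2) * c i)` by `t i = exp (-((b - a) / 2) * c i)`. For `a ≥ 0` both `u` and `t`
decrease in `c i`, so they are similarly ordered. Cauchy–Schwarz gives
`(∑ u t)² ≤ (∑ u) (∑ u t²)` and the weighted Chebyshev inequality gives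
`(∑ u²) (∑ u t²) ≤ (∑ u) (∑ u² t²)`; together they say `∑ u² / (∑ u)² ≤ ∑ (u t)² / (∑ u t)²`.
-/

open Finset Real

section

variable {ι : Type*} [Fintype ι]

noncomputable def sumSqWeights (u : ι → ℝ) : ℝ :=
  ∑ i, (u i / ∑ j, u j) ^ 2

lemma sumSqWeights_eq (u : ι → ℝ) :
    sumSqWeights u = (∑ i, u i ^ 2) / (∑ i, u i) ^ 2 := by
  simp only [sumSqWeights, div_pow, ← sum_div]

lemma sumSqWeights_pos [Nonempty ι] {u : ι → ℝ} (hu : ∀ i, 0 < u i) : 0 < sumSqWeights u := by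
  rw [sumSqWeights_eq]
  have := sum_pos (fun i _ => hu i) univ_nonempty
  have := sum_pos (fun i _ => pow_pos (hu i) 2) univ_nonempty
  positivity

lemma Monovary.sum_mul_mul_sum_le {w f g : ι → ℝ} (hw : ∀ i, 0 ≤ w i) (hfg : Monovary f g) :
    (∑ i, w i * f i) * (∑ i, w i * g i) ≤ (∑ i, w i) * ∑ i, w i * f i * g i := by
  have hpair : 0 ≤ ∑ i, ∑ j, w i * w j * ((f i - f j) * (g i - g j)) :=
    sum_nonneg fun i _ => sum_nonneg fun j _ =>
      mul_nonneg (mul_nonneg (hw i) (hw j)) (hfg.sub_mul_sub_nonneg j i)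
  have hexpand : ∑ i, ∑ j, w i * w j * ((f i - f j) * (g i - g j)) =
      2 * ((∑ i, w i) * (∑ i, w i * f i * g i) - (∑ i, w i * f i) * ∑ i, w i * g i) := by
    have h : ∀ i j, w i * w j * ((f i - f j) * (g i - g j)) =
        w i * f i * g i * w j + w i * (w j * f j * g j)
          - (w i * f i * (w j * g j) + w i * g i * (w j * f j)) := fun i j => by ring
    simp only [h, sum_sub_distrib, sum_add_distrib, ← mul_sum, ← sum_mul]
    ring
  linarith

lemma sum_sq_mul_sq_sum_mul_le {u t : ι → ℝ} (hu : ∀ i, 0 ≤ u i) (ht : ∀ i, 0 ≤ t i)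
    (hut : Monovary u t) :
    (∑ i, u i ^ 2) * (∑ i, u i * t i) ^ 2 ≤ (∑ i, (u i * t i) ^ 2) * (∑ i, u i) ^ 2 := by
  have cauchySchwarz : (∑ i, u i * t i) ^ 2 ≤ (∑ i, u i) * ∑ i, u i * t i ^ 2 :=
    sum_sq_le_sum_mul_sum_of_sq_le_mul _ (fun i _ => hu i)
      (fun i _ => mul_nonneg (hu i) (sq_nonneg _)) fun i _ => (by ring : _ = _).le
  have chebyshev : (∑ i, u i * u i) * (∑ i, u i * t i ^ 2) ≤
      (∑ i, u i) * ∑ i, u i * u i * t i ^ 2 :=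
    Monovary.sum_mul_mul_sum_le hu fun i j hij => hut (lt_of_pow_lt_pow_left₀ 2 (ht j) hij)
  calc (∑ i, u i ^ 2) * (∑ i, u i * t i) ^ 2
      ≤ (∑ i, u i * u i) * ((∑ i, u i) * ∑ i, u i * t i ^ 2) := by
        simp only [sq (u _)]
        exact mul_le_mul_of_nonneg_left cauchySchwarz (sum_nonneg fun i _ => mul_self_nonneg _)
    _ = (∑ i, u i * u i) * (∑ i, u i * t i ^ 2) * ∑ i, u i := by ring
    _ ≤ (∑ i, u i) * (∑ i, u i * u i * t i ^ 2) * ∑ i, u i :=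
        mul_le_mul_of_nonneg_right chebyshev (sum_nonneg fun i _ => hu i)
    _ = (∑ i, (u i * t i) ^ 2) * (∑ i, u i) ^ 2 := by
        simp only [mul_pow]; ring_nf

lemma sumSqWeights_le_sumSqWeights_mul {u t : ι → ℝ} (hu : ∀ i, 0 < u i) (ht : ∀ i, 0 < t i)
    (hut : Monovary u t) : sumSqWeights u ≤ sumSqWeights (u * t) := by
  cases isEmpty_or_nonempty ι
  · simp [sumSqWeights]
  have hsum : 0 < ∑ i, u i := sum_pos (fun i _ => hu i) univ_nonempty
  have hsum_mul : 0 < ∑ i, u i * t i := sum_pos (fun i _ => mul_pos (hu i) (ht i)) univ_nonempty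
  rw [sumSqWeights_eq, sumSqWeights_eq, div_le_div_iff₀ (by positivity) (by positivity)]
  exact sum_sq_mul_sq_sum_mul_le (fun i => (hu i).le) (fun i => (ht i).le) hut

lemma antitone_exp_neg_mul {k : ℝ} (hk : 0 ≤ k) : Antitone fun x => exp (-k * x) :=
  fun _ _ hxy => exp_le_exp.mpr (mul_le_mul_of_nonpos_left hxy (neg_nonpos.mpr hk))

lemma monotoneOn_sumSqWeights_exp (c : ι → ℝ) :
    MonotoneOn (fun α => sumSqWeights fun i => exp (-(α / 2) * c i)) (Set.Ici 0) := by
  intro a ha b _ hab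
  have hsplit : (fun i => exp (-(b / 2) * c i)) =
      (fun i => exp (-(a / 2) * c i)) * fun i => exp (-((b - a) / 2) * c i) := by
    ext i; simp only [Pi.mul_apply, ← exp_add]; ring_nf
  have hmonovary : Monovary (fun i => exp (-(a / 2) * c i)) fun i => exp (-((b - a) / 2) * c i) :=
    ((antitone_exp_neg_mul (by linarith [Set.mem_Ici.mp ha])).monovary
      (antitone_exp_neg_mul (by linarith))).comp_right c
  simp only [hsplit]
  exact sumSqWeights_le_sumSqWeights_mul (fun _ => exp_pos _) (fun _ => exp_pos _) hmonovary

lemma antitoneOn_inv_sumSqWeights_exp (c : ι → ℝ) :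
    AntitoneOn (fun α => (sumSqWeights fun i => exp (-(α / 2) * c i))⁻¹) (Set.Ici 0) := by
  cases isEmpty_or_nonempty ι
  · simp [sumSqWeights, antitoneOn_const]
  exact fun a ha b hb hab =>
    inv_anti₀ (sumSqWeights_pos fun _ => exp_pos _) (monotoneOn_sumSqWeights_exp c ha hb hab)

end

theorem ess_monotone_general (M : ℕ) (c : Fin M → ℝ) :
    MonotoneOn
      (fun α : ℝ =>
        ∑ i, (Real.exp (-(α / 2) * c i) / ∑ j, Real.exp (-(α / 2) * c j)) ^ 2)
      (Set.Ici 0) ∧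
    AntitoneOn
      (fun α : ℝ =>
        (∑ i, (Real.exp (-(α / 2) * c i) / ∑ j, Real.exp (-(α / 2) * c j)) ^ 2)⁻¹)
      (Set.Ici 0) :=
  ⟨monotoneOn_sumSqWeights_exp c, antitoneOn_inv_sumSqWeights_exp c⟩

theorem ess_monotone (M : ℕ) (c : Fin M → ℝ) (hc : ∀ i, 0 ≤ c i) :
    MonotoneOn
      (fun α : ℝ =>
        ∑ i, (Real.exp (-(α / 2) * c i) / ∑ j, Real.exp (-(α / 2) * c j)) ^ 2)
      (Set.Ici 0) ∧
    AntitoneOn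
      (fun α : ℝ =>
        (∑ i, (Real.exp (-(α / 2) * c i) / ∑ j, Real.exp (-(α / 2) * c j)) ^ 2)⁻¹)
      (Set.Ici 0) :=
  ess_monotone_general M c
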